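/- Let A be a commutative ring with a derivation d : A → A, and on A[T,T⁻¹] let {f,g}_r := T^r·(∂_T f · D g − D f · ∂_T g), let res denote the coefficient of T⁻¹, and let P_{≥s}, P_{<s} be the projections onto terms of degree ≥ s, < s. Then for all f, h, L ∈ A[T,T⁻¹], all n ∈ ℕ, and all k, r ∈ ℤ, the element res(T^{−r}·f·Lⁿ·P_{<2r−k}({L,h}_r)) − res(T^{−r}·h·{P_{≥k−r}(Lⁿ·f), L}_r) of A lies in the image of d (it is a total derivative). -/

import Mathlib

open LaurentPolynomial

variable {A : Type*} [CommRing A]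

/-- Formal derivative `∂_T` on Laurent polynomials: `∂_T (a·Tⁿ) = n·a·Tⁿ⁻¹`. -/
noncomputable def tder (f : A[T;T⁻¹]) : A[T;T⁻¹] :=
  Finsupp.sum f.coeff fun n a => C (n • a) * T (n - 1)

/-- Coefficientwise extension `D` of a derivation `d : A → A`: `D (a·Tⁿ) = d(a)·Tⁿ`. -/
noncomputable def cder (d : A → A) (f : A[T;T⁻¹]) : A[T;T⁻¹] :=
  Finsupp.sum f.coeff fun n a => C (d a) * T n

/-- The bracket `{f,g}_r := T^r·(∂_T f · D g − D f · ∂_T g)`. -/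
noncomputable def lbr (d : A → A) (r : ℤ) (f g : A[T;T⁻¹]) : A[T;T⁻¹] :=
  T r * (tder f * cder d g - cder d f * tder g)

/-- The residue (coefficient of `T⁻¹`). -/
noncomputable def res (f : A[T;T⁻¹]) : A := f.coeff (-1)

/-- Projection onto the terms of degree `≥ s`. -/
noncomputable def Pge (s : ℤ) (f : A[T;T⁻¹]) : A[T;T⁻¹] :=
  Finsupp.sum f.coeff fun n a => if s ≤ n then C a * T n else 0

/-- Projection onto the terms of degree `< s`. -/
noncomputable def Plt (s : ℤ) (f : A[T;T⁻¹]) : A[T;T⁻¹] :=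
  Finsupp.sum f.coeff fun n a => if n < s then C a * T n else 0

section AuxTraceRel
variable {A : Type*} [CommRing A]

lemma coeff_fsum (g : ℤ →₀ A) (F : ℤ → A → A[T;T⁻¹]) (s : ℤ) :
    (g.sum F).coeff s = g.sum fun n a => (F n a).coeff s := by
  simp [Finsupp.sum, AddMonoidAlgebra.coeff_sum, Finsupp.finset_sum_apply]

lemma tder_apply (f : A[T;T⁻¹]) (s : ℤ) : (tder f).coeff s = (s+1) • f.coeff (s+1) := by
  unfold tder
  rw [coeff_fsum]
  simp_rw [← single_eq_C_mul_T, AddMonoidAlgebra.coeff_single, Finsupp.single_apply]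
  rw [Finsupp.sum_eq_single (s+1) (fun b _ hb => by rw [if_neg (by omega)])
    (fun h => by simp [h])]
  simp

lemma cder_apply (d : A → A) (hd0 : d 0 = 0) (f : A[T;T⁻¹]) (s : ℤ) :
    (cder d f).coeff s = d (f.coeff s) := by
  unfold cder
  rw [coeff_fsum]
  simp_rw [← single_eq_C_mul_T, AddMonoidAlgebra.coeff_single, Finsupp.single_apply]
  rw [Finsupp.sum_eq_single s (fun b _ hb => by rw [if_neg hb])
    (fun h => by simp [h, hd0])]
  simp

lemma Pge_apply (s : ℤ) (f : A[T;T⁻¹]) (m : ℤ) :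
    (Pge s f).coeff m = if s ≤ m then f.coeff m else 0 := by
  unfold Pge
  rw [coeff_fsum]
  simp_rw [← single_eq_C_mul_T]
  rw [Finsupp.sum_eq_single m (fun b _ hb => by
      split_ifs with h
      · rw [AddMonoidAlgebra.coeff_single, Finsupp.single_apply, if_neg hb]
      · rfl)
    (fun h => by simp [h])]
  split_ifs with h <;> simp [← single_eq_C_mul_T, AddMonoidAlgebra.coeff_single]

lemma Plt_apply (s : ℤ) (f : A[T;T⁻¹]) (m : ℤ) :
    (Plt s f).coeff m = if m < s then f.coeff m else 0 := by
  unfold Plt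
  rw [coeff_fsum]
  simp_rw [← single_eq_C_mul_T]
  rw [Finsupp.sum_eq_single m (fun b _ hb => by
      split_ifs with h
      · rw [AddMonoidAlgebra.coeff_single, Finsupp.single_apply, if_neg hb]
      · rfl)
    (fun h => by simp [h])]
  split_ifs with h <;> simp [← single_eq_C_mul_T, AddMonoidAlgebra.coeff_single]

section Part2
variable {A : Type*} [CommRing A]

lemma mul_C_mul_T (a b : A) (m p : ℤ) :
    (C a * T m) * (C b * T p) = C (a*b) * T (m+p) := by
  rw [← single_eq_C_mul_T, ← single_eq_C_mul_T, ← single_eq_C_mul_T,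
    AddMonoidAlgebra.single_mul_single]

lemma T_mul_C_mul_T (u : ℤ) (a : A) (m : ℤ) :
    T u * (C a * T m) = C a * T (u+m) := by
  rw [mul_left_comm, ← T_add, add_comm u m]

lemma res_mono (a : A) (m : ℤ) : res (C a * T m) = if m = -1 then a else 0 := by
  simp [res, ← single_eq_C_mul_T, AddMonoidAlgebra.coeff_single, Finsupp.single_apply]

lemma res_add (f g : A[T;T⁻¹]) : res (f + g) = res f + res g :=
  Finsupp.add_apply f.coeff g.coeff (-1)

lemma res_sub (f g : A[T;T⁻¹]) : res (f - g) = res f - res g :=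
  Finsupp.sub_apply f.coeff g.coeff (-1)

lemma res_zero : res (0 : A[T;T⁻¹]) = 0 := rfl

lemma res_tder (f : A[T;T⁻¹]) : res (tder f) = 0 := by
  show (tder f).coeff (-1) = 0
  rw [tder_apply]; norm_num

lemma tder_single (a : A) (m : ℤ) : tder (C a * T m) = C (m • a) * T (m-1) := by
  unfold tder
  rw [← single_eq_C_mul_T, AddMonoidAlgebra.coeff_single, Finsupp.sum_single_index (by simp)]

lemma cder_single (d : A → A) (hd0 : d 0 = 0) (a : A) (m : ℤ) :
    cder d (C a * T m) = C (d a) * T m := by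
  unfold cder
  rw [← single_eq_C_mul_T, AddMonoidAlgebra.coeff_single, Finsupp.sum_single_index (by simp [hd0])]

lemma Pge_single (s : ℤ) (a : A) (m : ℤ) :
    Pge s (C a * T m) = if s ≤ m then C a * T m else 0 := by
  unfold Pge
  rw [← single_eq_C_mul_T, AddMonoidAlgebra.coeff_single, Finsupp.sum_single_index (by split_ifs <;> simp)]
  split_ifs <;> simp

lemma Plt_single (s : ℤ) (a : A) (m : ℤ) :
    Plt s (C a * T m) = if m < s then C a * T m else 0 := by
  unfold Plt
  rw [← single_eq_C_mul_T, AddMonoidAlgebra.coeff_single, Finsupp.sum_single_index (by split_ifs <;> simp)]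
  split_ifs <;> simp

lemma tder_add (f g : A[T;T⁻¹]) : tder (f + g) = tder f + tder g :=
  LaurentPolynomial.ext fun s => by
    rw [tder_apply, AddMonoidAlgebra.coeff_add, Finsupp.add_apply, AddMonoidAlgebra.coeff_add, Finsupp.add_apply, tder_apply, tder_apply, smul_add]

lemma cder_add (d : A → A) (hd : ∀ a b, d (a+b) = d a + d b) (f g : A[T;T⁻¹]) :
    cder d (f + g) = cder d f + cder d g :=
  LaurentPolynomial.ext fun s => by
    have h0 : d 0 = 0 := by have := hd 0 0; simpa using this.symm
    rw [cder_apply d h0, AddMonoidAlgebra.coeff_add, Finsupp.add_apply, AddMonoidAlgebra.coeff_add, Finsupp.add_apply, cder_apply d h0,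
      cder_apply d h0, hd]

lemma Pge_add (s : ℤ) (f g : A[T;T⁻¹]) : Pge s (f + g) = Pge s f + Pge s g :=
  LaurentPolynomial.ext fun m => by
    rw [Pge_apply, AddMonoidAlgebra.coeff_add, Finsupp.add_apply, AddMonoidAlgebra.coeff_add, Finsupp.add_apply, Pge_apply, Pge_apply]
    split_ifs <;> simp

lemma Plt_add (s : ℤ) (f g : A[T;T⁻¹]) : Plt s (f + g) = Plt s f + Plt s g :=
  LaurentPolynomial.ext fun m => by
    rw [Plt_apply, AddMonoidAlgebra.coeff_add, Finsupp.add_apply, AddMonoidAlgebra.coeff_add, Finsupp.add_apply, Plt_apply, Plt_apply]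
    split_ifs <;> simp

end Part2

section Part3
variable {A : Type*} [CommRing A]

lemma tder_mul (f g : A[T;T⁻¹]) : tder (f * g) = tder f * g + f * tder g := by
  induction f using LaurentPolynomial.induction_on' with
  | add p q hp hq =>
    rw [add_mul, tder_add, hp, hq, tder_add]; ring
  | C_mul_T m a =>
    induction g using LaurentPolynomial.induction_on' with
    | add p q hp hq =>
      rw [mul_add, tder_add, hp, hq, tder_add]; ring
    | C_mul_T p b =>
      rw [mul_C_mul_T, tder_single, tder_single, tder_single,
        mul_C_mul_T, mul_C_mul_T,
        show m - 1 + p = m + p - 1 by ring, show m + (p - 1) = m + p - 1 by ring,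
        ← add_mul, ← map_add,
        show m • a * b + a * (p • b) = (m + p) • (a * b) by
          rw [add_smul, smul_mul_assoc, mul_smul_comm]]

lemma cder_mul (d : A → A) (hd : ∀ a b, d (a+b) = d a + d b)
    (hm : ∀ a b, d (a*b) = a * d b + d a * b) (f g : A[T;T⁻¹]) :
    cder d (f * g) = cder d f * g + f * cder d g := by
  have h0 : d 0 = 0 := by have := hd 0 0; simpa using this.symm
  induction f using LaurentPolynomial.induction_on' with
  | add p q hp hq =>
    rw [add_mul, cder_add d hd, hp, hq, cder_add d hd]; ring
  | C_mul_T m a =>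
    induction g using LaurentPolynomial.induction_on' with
    | add p q hp hq =>
      rw [mul_add, cder_add d hd, hp, hq, cder_add d hd]; ring
    | C_mul_T p b =>
      rw [mul_C_mul_T, cder_single d h0, cder_single d h0, cder_single d h0,
        mul_C_mul_T, mul_C_mul_T, ← add_mul, ← map_add,
        show d a * b + a * d b = d (a * b) by rw [hm, add_comm]]

lemma cder_tder_comm (d : A → A) (hd : ∀ a b, d (a+b) = d a + d b) (f : A[T;T⁻¹]) :
    cder d (tder f) = tder (cder d f) := by
  have h0 : d 0 = 0 := by have := hd 0 0; simpa using this.symm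
  have hz : ∀ (n : ℤ) (a : A), d (n • a) = n • d a := by
    intro n a
    exact map_zsmul (AddMonoidHom.mk' d hd) n a
  exact LaurentPolynomial.ext fun s => by
    rw [cder_apply d h0, tder_apply, tder_apply, cder_apply d h0, hz]

lemma key_swap (r k : ℤ) (X Y : A[T;T⁻¹]) :
    res (T (-r) * (X * Plt (2*r-k) Y)) = res (T (-r) * (Pge (k-r) X * Y)) := by
  induction X using LaurentPolynomial.induction_on' with
  | add p q hp hq =>
    rw [add_mul, mul_add, res_add, hp, hq, Pge_add, add_mul, mul_add, res_add]
  | C_mul_T m a =>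
    induction Y using LaurentPolynomial.induction_on' with
    | add p q hp hq =>
      rw [Plt_add, mul_add, mul_add, res_add, hp, hq, mul_add, mul_add, res_add]
    | C_mul_T p b =>
      rw [Plt_single, Pge_single]
      split_ifs with h1 h2 h2
      · rfl
      · rw [zero_mul, mul_zero, res_zero, mul_C_mul_T, T_mul_C_mul_T, res_mono,
          if_neg (by omega)]
      · rw [mul_zero, mul_zero, res_zero, mul_C_mul_T, T_mul_C_mul_T, res_mono,
          if_neg (by omega)]
      · rw [mul_zero, zero_mul]

end Part3

lemma Tcancel (r : ℤ) (X Y : A[T;T⁻¹]) : T (-r) * (X * (T r * Y)) = X * Y := by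
  rw [show T (-r) * (X * (T r * Y)) = (T (-r) * T r) * (X * Y) by ring,
    ← T_add, neg_add_cancel, T_zero, one_mul]


end AuxTraceRel

/-- For all `f, h, L ∈ A[T,T⁻¹]`, `n ∈ ℕ`, and `k, r ∈ ℤ`, the element
`res(T^{−r}·f·Lⁿ·P_{<2r−k}({L,h}_r)) − res(T^{−r}·h·{P_{≥k−r}(Lⁿ·f), L}_r)` is a total
derivative (lies in the image of `d`). -/
theorem trace_relation_two (d : A → A)
    (hd_add : ∀ a b : A, d (a + b) = d a + d b)
    (hd_mul : ∀ a b : A, d (a * b) = a * d b + d a * b)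
    (f h L : A[T;T⁻¹]) (n : ℕ) (k r : ℤ) :
    res (T (-r) * (f * (L ^ n * Plt (2 * r - k) (lbr d r L h)))) -
      res (T (-r) * (h * lbr d r (Pge (k - r) (L ^ n * f)) L)) ∈ Set.range d := by
  have h0 : d 0 = 0 := by have := hd_add 0 0; simpa using this.symm
  have res_cder : ∀ g : A[T;T⁻¹], res (cder d g) = d (res g) := fun g =>
    cder_apply d h0 g (-1)
  set P : A[T;T⁻¹] := Pge (k - r) (L ^ n * f) with hP
  have e1 : res (T (-r) * (f * (L ^ n * Plt (2*r-k) (lbr d r L h)))) =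
      res (P * (tder L * cder d h - cder d L * tder h)) := by
    rw [show f * (L ^ n * Plt (2*r-k) (lbr d r L h))
        = (L^n*f) * Plt (2*r-k) (lbr d r L h) by ring, key_swap]
    rw [lbr, Tcancel]
  have e2 : res (T (-r) * (h * lbr d r P L)) =
      res (h * (tder P * cder d L - cder d P * tder L)) := by
    rw [lbr, Tcancel]
  have poly : cder d (tder L * P * h) =
      P * (tder L * cder d h - cder d L * tder h)
      - h * (tder P * cder d L - cder d P * tder L)
      + tder (cder d L * P * h) := by
    rw [cder_mul d hd_add hd_mul, cder_mul d hd_add hd_mul, tder_mul, tder_mul,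
      cder_tder_comm d hd_add]
    ring
  refine ⟨res (tder L * P * h), ?_⟩
  rw [e1, e2, ← res_cder, poly, res_add, res_sub, res_tder, add_zero]
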